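/- (Example of a generic null curve with constant curvatures.) Equip ℝ⁵ with the bilinear form ⟨X,Y⟩ = −X⁰Y⁰ − X¹Y¹ + X²Y² + X³Y³ + X⁴Y⁴. Let m, n be integers with 0 < m < n and r ∈ (0,1), and define W : ℝ → ℝ⁵ by W(s) = (m cos(ns), m sin(ns), n cos(ms), n sin(ms), nr/√(1−r²)). Then ⟨W,W⟩ equals the positive constant (n² − m²) + n²r²/(1−r²), ⟨W,W′⟩ ≡ 0, ⟨W′,W′⟩ ≡ 0, and ⟨W″,W″⟩ equals the negative constant m²n²(m² − n²). Consequently Γ := W/√⟨W,W⟩ satisfies ⟨Γ,Γ⟩ ≡ 1, ⟨Γ′,Γ′⟩ ≡ 0, and ⟨Γ″,Γ″⟩ is a negative constant; i.e. Γ is a generic null curve in the hyperquadric S^{2,2} = {V ∈ ℝ⁵ : ⟨V,V⟩ = 1}. -/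

import Mathlib

/-- The signature `(2,3)` bilinear form in pseudo-orthogonal coordinates:
`⟨X,Y⟩ = −X⁰Y⁰ − X¹Y¹ + X²Y² + X³Y³ + X⁴Y⁴`. -/
noncomputable def ipPO (X Y : Fin 5 → ℝ) : ℝ :=
  -(X 0 * Y 0) - X 1 * Y 1 + X 2 * Y 2 + X 3 * Y 3 + X 4 * Y 4

/-- The curve `W(s) = (m cos ns, m sin ns, n cos ms, n sin ms, nr/√(1−r²))`. -/
noncomputable def Wcurve (m n : ℤ) (r : ℝ) (s : ℝ) : Fin 5 → ℝ :=
  ![(m : ℝ) * Real.cos (n * s), (m : ℝ) * Real.sin (n * s),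
    (n : ℝ) * Real.cos (m * s), (n : ℝ) * Real.sin (m * s),
    (n : ℝ) * r / Real.sqrt (1 - r ^ 2)]

/-! `⟨W,W⟩`, `⟨W′,W′⟩` and `⟨W″,W″⟩` are constant because each of them is a combination of
`cos² + sin²` of the two angles `ns` and `ms`; the signs of the form are exactly what makes
`⟨W′,W′⟩ = −m²n² + m²n²` vanish. Since `⟨W,W⟩ = C > 0` is constant, `Γ = C^{-1/2} • W` is a
constant multiple of `W`, so `⟨Γ,Γ⟩ = 1`, `⟨Γ′,Γ′⟩ = 0` and `⟨Γ″,Γ″⟩ = C⁻¹ m²n²(m² − n²) < 0`. -/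

open Real

lemma ipPO_vec (a₀ a₁ a₂ a₃ a₄ b₀ b₁ b₂ b₃ b₄ : ℝ) :
    ipPO ![a₀, a₁, a₂, a₃, a₄] ![b₀, b₁, b₂, b₃, b₄] =
      -(a₀ * b₀) - a₁ * b₁ + a₂ * b₂ + a₃ * b₃ + a₄ * b₄ :=
  rfl

lemma ipPO_smul_smul (a : ℝ) (X Y : Fin 5 → ℝ) : ipPO (a • X) (a • Y) = a ^ 2 * ipPO X Y := by
  simp only [ipPO, Pi.smul_apply, smul_eq_mul]
  ring

lemma hasDerivAt_const_mul_cos_mul (c ω s : ℝ) :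
    HasDerivAt (fun t => c * cos (ω * t)) (-(c * ω) * sin (ω * s)) s :=
  (((hasDerivAt_id' s).const_mul ω).cos.const_mul c).congr_deriv (by ring)

lemma hasDerivAt_const_mul_sin_mul (c ω s : ℝ) :
    HasDerivAt (fun t => c * sin (ω * t)) (c * ω * cos (ω * s)) s :=
  (((hasDerivAt_id' s).const_mul ω).sin.const_mul c).congr_deriv (by ring)

section Wcurve

variable (m n : ℤ)

noncomputable def wcurveDeriv (s : ℝ) : Fin 5 → ℝ :=
  ![-((m : ℝ) * n) * sin (n * s), (m : ℝ) * n * cos (n * s),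
    -((m : ℝ) * n) * sin (m * s), (m : ℝ) * n * cos (m * s), 0]

noncomputable def wcurveDeriv2 (s : ℝ) : Fin 5 → ℝ :=
  ![-((m : ℝ) * n ^ 2) * cos (n * s), -((m : ℝ) * n ^ 2) * sin (n * s),
    -((m : ℝ) ^ 2 * n) * cos (m * s), -((m : ℝ) ^ 2 * n) * sin (m * s), 0]

lemma hasDerivAt_wcurve (r s : ℝ) : HasDerivAt (Wcurve m n r) (wcurveDeriv m n s) s := by
  refine hasDerivAt_pi.2 fun i => ?_
  fin_cases i <;> simp only [Wcurve, wcurveDeriv, Fin.reduceFinMk, Matrix.cons_val]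
  · exact hasDerivAt_const_mul_cos_mul m n s
  · exact hasDerivAt_const_mul_sin_mul m n s
  · exact (hasDerivAt_const_mul_cos_mul n m s).congr_deriv (by ring)
  · exact (hasDerivAt_const_mul_sin_mul n m s).congr_deriv (by ring)
  · exact hasDerivAt_const s _

lemma hasDerivAt_wcurveDeriv (s : ℝ) : HasDerivAt (wcurveDeriv m n) (wcurveDeriv2 m n s) s := by
  refine hasDerivAt_pi.2 fun i => ?_
  fin_cases i <;> simp only [wcurveDeriv, wcurveDeriv2, Fin.reduceFinMk, Matrix.cons_val]
  · exact (hasDerivAt_const_mul_sin_mul _ n s).congr_deriv (by ring)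
  · exact (hasDerivAt_const_mul_cos_mul _ n s).congr_deriv (by ring)
  · exact (hasDerivAt_const_mul_sin_mul _ m s).congr_deriv (by ring)
  · exact (hasDerivAt_const_mul_cos_mul _ m s).congr_deriv (by ring)
  · exact hasDerivAt_const s _

lemma deriv_wcurve (r : ℝ) : deriv (Wcurve m n r) = wcurveDeriv m n :=
  funext fun s => (hasDerivAt_wcurve m n r s).deriv

lemma deriv_deriv_wcurve (r : ℝ) : deriv (deriv (Wcurve m n r)) = wcurveDeriv2 m n := by
  rw [deriv_wcurve]
  exact funext fun s => (hasDerivAt_wcurveDeriv m n s).deriv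

lemma ipPO_wcurve_self {r : ℝ} (hr : r ^ 2 ≤ 1) (s : ℝ) :
    ipPO (Wcurve m n r s) (Wcurve m n r s) =
      ((n : ℝ) ^ 2 - (m : ℝ) ^ 2) + (n : ℝ) ^ 2 * r ^ 2 / (1 - r ^ 2) := by
  rw [Wcurve, ipPO_vec, div_mul_div_comm, mul_self_sqrt (by linarith)]
  linear_combination (-(m : ℝ) ^ 2) * sin_sq_add_cos_sq ((n : ℝ) * s) +
    (n : ℝ) ^ 2 * sin_sq_add_cos_sq ((m : ℝ) * s)

lemma ipPO_wcurve_deriv_wcurve (r s : ℝ) :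
    ipPO (Wcurve m n r s) (deriv (Wcurve m n r) s) = 0 := by
  rw [deriv_wcurve, Wcurve, wcurveDeriv, ipPO_vec]
  ring

lemma ipPO_deriv_wcurve_self (r s : ℝ) :
    ipPO (deriv (Wcurve m n r) s) (deriv (Wcurve m n r) s) = 0 := by
  rw [deriv_wcurve, wcurveDeriv, ipPO_vec]
  linear_combination (-(m : ℝ) ^ 2 * (n : ℝ) ^ 2) * sin_sq_add_cos_sq ((n : ℝ) * s) +
    (m : ℝ) ^ 2 * (n : ℝ) ^ 2 * sin_sq_add_cos_sq ((m : ℝ) * s)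

lemma ipPO_deriv_deriv_wcurve_self (r s : ℝ) :
    ipPO (deriv (deriv (Wcurve m n r)) s) (deriv (deriv (Wcurve m n r)) s) =
      (m : ℝ) ^ 2 * (n : ℝ) ^ 2 * ((m : ℝ) ^ 2 - (n : ℝ) ^ 2) := by
  rw [deriv_deriv_wcurve, wcurveDeriv2, ipPO_vec]
  linear_combination (-(m : ℝ) ^ 2 * (n : ℝ) ^ 4) * sin_sq_add_cos_sq ((n : ℝ) * s) +
    (m : ℝ) ^ 4 * (n : ℝ) ^ 2 * sin_sq_add_cos_sq ((m : ℝ) * s)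

end Wcurve

section normalizeCurve

variable {f : ℝ → Fin 5 → ℝ} {C : ℝ}

noncomputable def normalizeCurve (f : ℝ → Fin 5 → ℝ) : ℝ → Fin 5 → ℝ :=
  fun t => (√(ipPO (f t) (f t)))⁻¹ • f t

lemma normalizeCurve_eq_smul (hf : ∀ t, ipPO (f t) (f t) = C) :
    normalizeCurve f = (√C)⁻¹ • f :=
  funext fun t => by rw [normalizeCurve, hf t, Pi.smul_apply]

lemma ipPO_inv_sqrt_smul_self (hC : 0 ≤ C) (X : Fin 5 → ℝ) :
    ipPO ((√C)⁻¹ • X) ((√C)⁻¹ • X) = C⁻¹ * ipPO X X := by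
  rw [ipPO_smul_smul, inv_pow, sq_sqrt hC]

lemma ipPO_normalizeCurve_self (hC : 0 < C) (hf : ∀ t, ipPO (f t) (f t) = C) (s : ℝ) :
    ipPO (normalizeCurve f s) (normalizeCurve f s) = 1 := by
  rw [normalizeCurve_eq_smul hf, Pi.smul_apply, ipPO_inv_sqrt_smul_self hC.le, hf s,
    inv_mul_cancel₀ hC.ne']

lemma ipPO_deriv_normalizeCurve_self (hC : 0 ≤ C) (hf : ∀ t, ipPO (f t) (f t) = C) (s : ℝ) :
    ipPO (deriv (normalizeCurve f) s) (deriv (normalizeCurve f) s) =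
      C⁻¹ * ipPO (deriv f s) (deriv f s) := by
  rw [normalizeCurve_eq_smul hf, deriv_const_smul_field, ipPO_inv_sqrt_smul_self hC]

lemma ipPO_deriv_deriv_normalizeCurve_self (hC : 0 ≤ C) (hf : ∀ t, ipPO (f t) (f t) = C)
    (s : ℝ) :
    ipPO (deriv (deriv (normalizeCurve f)) s) (deriv (deriv (normalizeCurve f)) s) =
      C⁻¹ * ipPO (deriv (deriv f) s) (deriv (deriv f) s) := by
  have : deriv (normalizeCurve f) = (√C)⁻¹ • deriv f := by
    rw [normalizeCurve_eq_smul hf]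
    exact funext fun t => deriv_const_smul_field _ f
  rw [this, deriv_const_smul_field, ipPO_inv_sqrt_smul_self hC]

end normalizeCurve

/-- example of a generic null curve with constant curvatures:
`⟨W,W⟩ = (n²−m²) + n²r²/(1−r²) > 0`, `⟨W,W′⟩ = ⟨W′,W′⟩ = 0`,
`⟨W″,W″⟩ = m²n²(m²−n²) < 0`; hence `Γ = W/√⟨W,W⟩` satisfies `⟨Γ,Γ⟩ = 1`,
`⟨Γ′,Γ′⟩ = 0` and `⟨Γ″,Γ″⟩` is a negative constant, i.e. `Γ` is a generic null
curve in `S^{2,2}`. -/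
theorem stmt13 (m n : ℤ) (hm : 0 < m) (hmn : m < n) (r : ℝ) (hr : r ∈ Set.Ioo (0 : ℝ) 1) :
    (∀ s : ℝ, ipPO (Wcurve m n r s) (Wcurve m n r s) =
      ((n : ℝ) ^ 2 - (m : ℝ) ^ 2) + (n : ℝ) ^ 2 * r ^ 2 / (1 - r ^ 2)) ∧
    (0 : ℝ) < ((n : ℝ) ^ 2 - (m : ℝ) ^ 2) + (n : ℝ) ^ 2 * r ^ 2 / (1 - r ^ 2) ∧
    (∀ s : ℝ, ipPO (Wcurve m n r s) (deriv (Wcurve m n r) s) = 0) ∧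
    (∀ s : ℝ, ipPO (deriv (Wcurve m n r) s) (deriv (Wcurve m n r) s) = 0) ∧
    (∀ s : ℝ, ipPO (deriv (deriv (Wcurve m n r)) s) (deriv (deriv (Wcurve m n r)) s) =
      (m : ℝ) ^ 2 * (n : ℝ) ^ 2 * ((m : ℝ) ^ 2 - (n : ℝ) ^ 2)) ∧
    (m : ℝ) ^ 2 * (n : ℝ) ^ 2 * ((m : ℝ) ^ 2 - (n : ℝ) ^ 2) < 0 ∧
    (∀ s : ℝ,
      ipPO ((fun t => (Real.sqrt (ipPO (Wcurve m n r t) (Wcurve m n r t)))⁻¹ • Wcurve m n r t) s)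
        ((fun t => (Real.sqrt (ipPO (Wcurve m n r t) (Wcurve m n r t)))⁻¹ • Wcurve m n r t) s) = 1) ∧
    (∀ s : ℝ,
      ipPO (deriv (fun t => (Real.sqrt (ipPO (Wcurve m n r t) (Wcurve m n r t)))⁻¹ • Wcurve m n r t) s)
        (deriv (fun t => (Real.sqrt (ipPO (Wcurve m n r t) (Wcurve m n r t)))⁻¹ • Wcurve m n r t) s) = 0) ∧
    (∃ k : ℝ, k < 0 ∧ ∀ s : ℝ,
      ipPO (deriv (deriv (fun t => (Real.sqrt (ipPO (Wcurve m n r t) (Wcurve m n r t)))⁻¹ • Wcurve m n r t)) s)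
        (deriv (deriv (fun t => (Real.sqrt (ipPO (Wcurve m n r t) (Wcurve m n r t)))⁻¹ • Wcurve m n r t)) s) = k) := by
  obtain ⟨hr0, hr1⟩ := hr
  have hmR : (0 : ℝ) < m := by exact_mod_cast hm
  have hmnR : (m : ℝ) < n := by exact_mod_cast hmn
  have hnR : (0 : ℝ) < n := hmR.trans hmnR
  have hr2 : r ^ 2 < 1 := by nlinarith
  have hW := ipPO_wcurve_self m n hr2.le
  have hC : 0 < ((n : ℝ) ^ 2 - (m : ℝ) ^ 2) + (n : ℝ) ^ 2 * r ^ 2 / (1 - r ^ 2) := by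
    have : 0 ≤ (n : ℝ) ^ 2 * r ^ 2 / (1 - r ^ 2) := div_nonneg (by positivity) (by linarith)
    nlinarith
  have hK : (m : ℝ) ^ 2 * (n : ℝ) ^ 2 * ((m : ℝ) ^ 2 - (n : ℝ) ^ 2) < 0 :=
    mul_neg_of_pos_of_neg (by positivity) (by nlinarith)
  refine ⟨hW, hC, ipPO_wcurve_deriv_wcurve m n r, ipPO_deriv_wcurve_self m n r,
    ipPO_deriv_deriv_wcurve_self m n r, hK, ipPO_normalizeCurve_self hC hW, fun s => ?_, _,
    mul_neg_of_pos_of_neg (inv_pos.2 hC) hK, fun s => ?_⟩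
  · exact (ipPO_deriv_normalizeCurve_self hC.le hW s).trans
      (by rw [ipPO_deriv_wcurve_self, mul_zero])
  · exact (ipPO_deriv_deriv_normalizeCurve_self hC.le hW s).trans
      (by rw [ipPO_deriv_deriv_wcurve_self])
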